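/- arXiv:2305.18587 — 5 statements merged into one kernel-verified Lean document; each statement's English description precedes it below -/
import Mathlib

section
/- Let T be a tree on {1,...,n} with an ascending labeling (identifying each vertex with its label). Then every path v₁, v₂, ..., vₘ in T is unimodal: there exists an index k with v₁ > v₂ > ... > v_{k-1} > v_k < v_{k+1} < ... < vₘ. -/
/-- Let `T` be a tree on `{0,...,n-1}` whose identity labeling is ascending
(every vertex with nonzero label has a unique neighbor of smaller label, i.e. it is a
pendant of the subtree induced by the smaller labels).  Then every path
`v 0, v 1, ..., v m` in `T` is unimodal: its labels strictly decrease up to some index `k`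
and strictly increase afterwards. -/
theorem tree_path_unimodal {n : ℕ} (G : SimpleGraph (Fin n)) (hT : G.IsTree)
    (hasc : ∀ k : Fin n, k.val ≠ 0 → ∃! j : Fin n, j < k ∧ G.Adj j k)
    (m : ℕ) (v : Fin (m + 1) → Fin n) (hinj : Function.Injective v)
    (hadj : ∀ i : Fin m, G.Adj (v i.castSucc) (v i.succ)) :
    ∃ k : Fin (m + 1),
      (∀ i j : Fin (m + 1), i < j → j ≤ k → v j < v i) ∧
      (∀ i j : Fin (m + 1), k ≤ i → i < j → v i < v j) := by
  classical
  set u : ℕ → Fin n := fun i => v ⟨min i m, by omega⟩ with hu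
  have hval : ∀ i (hi : i ≤ m), u i = v ⟨i, Nat.lt_succ_of_le hi⟩ := by
    intro i hi
    simp only [hu]
    congr 1
    exact Fin.ext (by simp [Nat.min_eq_left hi])
  have hue : ∀ i : Fin (m + 1), u i.val = v i := by
    intro i
    rw [hval i.val (Nat.lt_succ_iff.mp i.isLt)]
  have uinj : ∀ i j, i ≤ m → j ≤ m → u i = u j → i = j := by
    intro i j hi hj h
    rw [hval i hi, hval j hj] at h
    have := hinj h
    exact congrArg Fin.val this
  have uadj : ∀ i, i < m → G.Adj (u i) (u (i + 1)) := by
    intro i hi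
    rw [hval i hi.le, hval (i + 1) hi]
    exact hadj ⟨i, hi⟩
  have Qmono : ∀ i, i + 1 < m → u i < u (i + 1) → u (i + 1) < u (i + 2) := by
    intro i hi hlt
    rcases lt_or_ge (u (i + 1)) (u (i + 2)) with h | h
    · exact h
    have hne : u (i + 1) ≠ u (i + 2) := fun he => by
      have := uinj _ _ (by omega) (by omega) he; omega
    have h2 : u (i + 2) < u (i + 1) := lt_of_le_of_ne h (fun he => hne he.symm)
    have hv0 : (u (i + 1)).val ≠ 0 := by
      have : (u i).val < (u (i + 1)).val := hlt
      omega
    obtain ⟨j, hj, huniq⟩ := hasc (u (i + 1)) hv0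
    have e1 := huniq (u i) ⟨hlt, uadj i (by omega)⟩
    have e2 := huniq (u (i + 2)) ⟨h2, (uadj (i + 1) hi).symm⟩
    have := uinj _ _ (by omega) (by omega) (e1.trans e2.symm)
    omega
  have Qge : ∀ t, t < m → ∀ s, s ≤ t → u s < u (s + 1) → u t < u (t + 1) := by
    intro t
    induction t with
    | zero => intro _ s hs h; obtain rfl : s = 0 := Nat.le_zero.mp hs; exact h
    | succ t ih =>
      intro ht s hs h
      rcases Nat.le_succ_iff_eq_or_le.mp hs with h1 | h1
      · subst h1; exact h
      · exact Qmono t ht (ih (by omega) s h1 h)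
  have chain : ∀ a b, a < b → (∀ s, a ≤ s → s < b → u s < u (s + 1)) → u a < u b := by
    intro a b hab hstep
    induction b with
    | zero => omega
    | succ b ih =>
      rcases Nat.lt_succ_iff_lt_or_eq.mp hab with h | h
      · exact (ih h (fun s hs h2 => hstep s hs (by omega))).trans
          (hstep b (by omega) (by omega))
      · subst h; exact hstep a le_rfl (by omega)
  have chain' : ∀ a b, a < b → (∀ s, a ≤ s → s < b → u (s + 1) < u s) → u b < u a := by
    intro a b hab hstep
    induction b with
    | zero => omega
    | succ b ih =>
      rcases Nat.lt_succ_iff_lt_or_eq.mp hab with h | h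
      · exact (hstep b (by omega) (by omega)).trans
          (ih h (fun s hs h2 => hstep s hs (by omega)))
      · subst h; exact hstep a le_rfl (by omega)
  by_cases hQ : ∃ i, i < m ∧ u i < u (i + 1)
  · set k₀ := Nat.find hQ with hk₀def
    have hk₀ := Nat.find_spec hQ
    refine ⟨⟨k₀, by omega⟩, ?_, ?_⟩
    · intro i j hij hjk
      have hjk' : (j : ℕ) ≤ k₀ := hjk
      have hij' : (i : ℕ) < (j : ℕ) := hij
      have hstep : ∀ s, (i : ℕ) ≤ s → s < (j : ℕ) → u (s + 1) < u s := by
        intro s hs hsj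
        have hsm : s < m := by omega
        have hnot : ¬ u s < u (s + 1) := fun h =>
          Nat.find_min hQ (show s < k₀ by omega) ⟨hsm, h⟩
        have hne : u (s + 1) ≠ u s := fun he => by
          have := uinj _ _ (by omega) (by omega) he; omega
        exact lt_of_le_of_ne (le_of_not_gt hnot) hne
      have := chain' i.val j.val hij' hstep
      rwa [hue, hue] at this
    · intro i j hik hij
      have hik' : k₀ ≤ (i : ℕ) := hik
      have hij' : (i : ℕ) < (j : ℕ) := hij
      have hjm : (j : ℕ) ≤ m := Nat.lt_succ_iff.mp j.isLt
      have hstep : ∀ s, (i : ℕ) ≤ s → s < (j : ℕ) → u s < u (s + 1) := by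
        intro s hs hsj
        exact Qge s (by omega) k₀ (by omega) hk₀.2
      have := chain i.val j.val hij' hstep
      rwa [hue, hue] at this
  · push_neg at hQ
    refine ⟨Fin.last m, ?_, ?_⟩
    · intro i j hij _
      have hij' : (i : ℕ) < (j : ℕ) := hij
      have hjm : (j : ℕ) ≤ m := Nat.lt_succ_iff.mp j.isLt
      have hstep : ∀ s, (i : ℕ) ≤ s → s < (j : ℕ) → u (s + 1) < u s := by
        intro s hs hsj
        have hsm : s < m := by omega
        have hnot := hQ s hsm
        have hne : u (s + 1) ≠ u s := fun he => by
          have := uinj _ _ (by omega) (by omega) he; omega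
        exact lt_of_le_of_ne hnot hne
      have := chain' i.val j.val hij' hstep
      rwa [hue, hue] at this
    · intro i j hik hij
      have hik' : m ≤ (i : ℕ) := hik
      have hij' : (i : ℕ) < (j : ℕ) := hij
      have := j.isLt
      omega
end

section
/- Let T be a tree on {1,...,n} with an ascending labeling. Then in any path of T, one of the two endpoints has the maximum label among all vertices of that path. -/
/-- Let `T` be a tree on `{0,...,n-1}` whose identity labeling is ascending
(every vertex with nonzero label has a unique neighbor of smaller label).  Then in any
path `v 0, ..., v m` of `T`, one of the two endpoints has the maximum label among all
vertices of the path. -/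
theorem tree_path_endpoint_max {n : ℕ} (G : SimpleGraph (Fin n)) (hT : G.IsTree)
    (hasc : ∀ k : Fin n, k.val ≠ 0 → ∃! j : Fin n, j < k ∧ G.Adj j k)
    (m : ℕ) (v : Fin (m + 1) → Fin n) (hinj : Function.Injective v)
    (hadj : ∀ i : Fin m, G.Adj (v i.castSucc) (v i.succ)) :
    (∀ i : Fin (m + 1), v i ≤ v 0) ∨ (∀ i : Fin (m + 1), v i ≤ v (Fin.last m)) := by
  obtain ⟨i, hi⟩ := Finite.exists_max v
  by_cases h0 : i = 0
  · exact Or.inl fun j => h0 ▸ hi j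
  by_cases hl : i = Fin.last m
  · exact Or.inr fun j => hl ▸ hi j
  exfalso
  have h1 : 1 ≤ i.val := Nat.one_le_iff_ne_zero.2 fun h => h0 (Fin.ext h)
  have h2 : i.val < m := lt_of_le_of_ne (Nat.lt_succ_iff.1 i.isLt) fun h => hl (Fin.ext h)
  set a : Fin m := ⟨i.val - 1, by omega⟩ with ha_def
  set b : Fin m := ⟨i.val, h2⟩ with hb_def
  have ha : a.succ = i := Fin.ext (by simp [ha_def]; omega)
  have hb : b.castSucc = i := Fin.ext rfl
  have hadja := hadj a
  have hadjb := hadj b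
  rw [ha] at hadja
  rw [hb] at hadjb
  have hne1 : v a.castSucc ≠ v i := fun h => by
    have := congrArg Fin.val (hinj h)
    simp [ha_def] at this
    omega
  have hne2 : v b.succ ≠ v i := fun h => by
    have := congrArg Fin.val (hinj h)
    simp [hb_def] at this
  have hlt1 : v a.castSucc < v i := lt_of_le_of_ne (hi _) hne1
  have hlt2 : v b.succ < v i := lt_of_le_of_ne (hi _) hne2
  have hvi0 : (v i).val ≠ 0 := by
    have := hlt1
    omega
  obtain ⟨j, hj, huniq⟩ := hasc (v i) hvi0
  have e1 := huniq (v a.castSucc) ⟨hlt1, hadja⟩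
  have e2 := huniq (v b.succ) ⟨hlt2, hadjb.symm⟩
  have := congrArg Fin.val (hinj (e1.trans e2.symm))
  simp [ha_def, hb_def] at this
end

section
/- Let T be a tree on {1,...,n} with an ascending labeling and let V' be a nonempty subset of vertices. Then the vertex of maximum label in V' is either an isolated vertex or a pendant of the induced subgraph T[V']. -/
theorem SimpleGraph.lt_max'_of_adj {α : Type*} [LinearOrder α] {G : SimpleGraph α}
    {s : Finset α} (hs : s.Nonempty) {u : α} (hu : u ∈ s) (hadj : G.Adj u (s.max' hs)) :
    u < s.max' hs :=
  (s.le_max' u hu).lt_of_ne hadj.ne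

theorem tree_max_vertex_pendant_or_isolated_general {n : ℕ} (G : SimpleGraph (Fin n))
    (hasc : ∀ k : Fin n, k.val ≠ 0 → ∃! j : Fin n, j < k ∧ G.Adj j k)
    (V' : Finset (Fin n)) (hne : V'.Nonempty) :
    (∀ u ∈ V', ¬ G.Adj u (V'.max' hne)) ∨
    (∃! u : Fin n, u ∈ V' ∧ G.Adj u (V'.max' hne)) := by
  rw [or_iff_not_imp_left]
  push Not
  rintro ⟨u, hu, hadj⟩
  have hlt := G.lt_max'_of_adj hne hu hadj
  obtain ⟨j, -, hj⟩ := hasc _ (Nat.ne_zero_of_lt hlt)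
  refine ⟨u, ⟨hu, hadj⟩, fun y ⟨hy, hyadj⟩ => ?_⟩
  rw [hj y ⟨G.lt_max'_of_adj hne hy hyadj, hyadj⟩, hj u ⟨hlt, hadj⟩]

/-- Let `T` be a tree on `{0,...,n-1}` whose identity labeling is ascending
(every vertex with nonzero label has a unique neighbor of smaller label).  For any
nonempty set `V'` of vertices, the vertex of maximum label in `V'` is either isolated in
the induced subgraph `T[V']` (no neighbors in `V'`) or a pendant of `T[V']`
(exactly one neighbor in `V'`). -/
theorem tree_max_vertex_pendant_or_isolated {n : ℕ} (G : SimpleGraph (Fin n))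
    (hT : G.IsTree)
    (hasc : ∀ k : Fin n, k.val ≠ 0 → ∃! j : Fin n, j < k ∧ G.Adj j k)
    (V' : Finset (Fin n)) (hne : V'.Nonempty) :
    (∀ u ∈ V', ¬ G.Adj u (V'.max' hne)) ∨
    (∃! u : Fin n, u ∈ V' ∧ G.Adj u (V'.max' hne)) :=
  tree_max_vertex_pendant_or_isolated_general G hasc V' hne
end

section
/- Let K be a field, S = K[x₁,...,xₙ,y₁,...,yₙ], let T be a tree on {1,...,n}, and let I = (x_i x_j + y_i y_j : {i,j} ∈ E(T)). Then for every path P: v₁, v₂, ..., v_{2m+1} in T of even length, the polynomial (x_{v₁} y_{v_{2m+1}} − x_{v_{2m+1}} y_{v₁}) · y_{v₂} y_{v₃} ⋯ y_{v_{2m}} belongs to I. -/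
open MvPolynomial

private lemma aux_pair {R : Type*} [CommRing R] (a b : ℕ → R) (k : ℕ)
    (h : ∀ i, i + 1 < 2 * k → b i * b (i + 1) = -(a i * a (i + 1))) :
    ∏ i ∈ Finset.range (2 * k), b i =
      (-1 : R) ^ k * ∏ i ∈ Finset.range (2 * k), a i := by
  induction k with
  | zero => simp
  | succ k ih =>
    have h2 : 2 * (k + 1) = 2 * k + 1 + 1 := by ring
    rw [h2, Finset.prod_range_succ, Finset.prod_range_succ, Finset.prod_range_succ,
      Finset.prod_range_succ, ih (fun i hi => h i (by omega))]
    have hk := h (2 * k) (by omega)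
    linear_combination ((-1 : R) ^ k * ∏ i ∈ Finset.range (2 * k), a i) * hk

set_option synthInstance.maxHeartbeats 1000000 in
/-- Let `T` be a tree on `{0,...,n-1}` and `I = L_T(2)` its Lovász–Saks–Schrijver ideal in
`K[x_0,...,x_{n-1},y_0,...,y_{n-1}]` (variables indexed by `Fin n ⊕ Fin n`, `x = inl`,
`y = inr`).  For every path `v 0, v 1, ..., v (2m)` of even length in `T`, the polynomial
`(x_{v 0} y_{v (2m)} − x_{v (2m)} y_{v 0}) · y_{v 1} y_{v 2} ⋯ y_{v (2m-1)}`
belongs to `I`. -/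
theorem even_path_polynomial_mem_LSS {K : Type} [Field K] {n : ℕ}
    (G : SimpleGraph (Fin n)) (hT : G.IsTree)
    (I : Ideal (MvPolynomial (Fin n ⊕ Fin n) K))
    (hI : I = Ideal.span {p | ∃ i j : Fin n, G.Adj i j ∧
      p = X (Sum.inl i) * X (Sum.inl j) + X (Sum.inr i) * X (Sum.inr j)})
    (m : ℕ) (hm : 1 ≤ m) (v : Fin (2 * m + 1) → Fin n)
    (hinj : Function.Injective v)
    (hadj : ∀ i : ℕ, (h : i + 1 < 2 * m + 1) → G.Adj (v ⟨i, by omega⟩) (v ⟨i + 1, h⟩)) :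
    (X (Sum.inl (v ⟨0, by omega⟩)) * X (Sum.inr (v ⟨2 * m, by omega⟩)) -
       X (Sum.inl (v ⟨2 * m, by omega⟩)) * X (Sum.inr (v ⟨0, by omega⟩))) *
      ∏ i : Fin (2 * m - 1), X (Sum.inr (v ⟨i.val + 1, by have := i.isLt; omega⟩)) ∈ I := by
  have hgen : ∀ i : ℕ, (hi : i + 1 ≤ 2 * m) →
      (X (Sum.inl (v ⟨i, by omega⟩)) * X (Sum.inl (v ⟨i + 1, by omega⟩)) +
        X (Sum.inr (v ⟨i, by omega⟩)) * X (Sum.inr (v ⟨i + 1, by omega⟩))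
        : MvPolynomial (Fin n ⊕ Fin n) K) ∈ I := by
    intro i hi
    rw [hI]
    exact Ideal.subset_span ⟨v ⟨i, by omega⟩, v ⟨i + 1, by omega⟩, hadj i (by omega), rfl⟩
  clear hI
  rw [← Ideal.Quotient.eq_zero_iff_mem]
  set v' : ℕ → Fin n := fun i => v ⟨min i (2 * m), by omega⟩ with hv'
  have hv'eq : ∀ i : ℕ, (h : i ≤ 2 * m) → v' i = v ⟨i, by omega⟩ := by
    intro i h
    exact congrArg v (Fin.ext (by simpa using Nat.min_eq_left h))
  set mk : MvPolynomial (Fin n ⊕ Fin n) K →+* _ := Ideal.Quotient.mk I with hmk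
  set a : ℕ → _ := fun i => mk (X (Sum.inl (v' i))) with ha
  set b : ℕ → _ := fun i => mk (X (Sum.inr (v' i))) with hb
  have hrel : ∀ i : ℕ, i + 1 ≤ 2 * m → b i * b (i + 1) = -(a i * a (i + 1)) := by
    intro i hi
    have h0 : mk (X (Sum.inl (v ⟨i, by omega⟩)) * X (Sum.inl (v ⟨i + 1, by omega⟩)) +
        X (Sum.inr (v ⟨i, by omega⟩)) * X (Sum.inr (v ⟨i + 1, by omega⟩))) = 0 :=
      Ideal.Quotient.eq_zero_iff_mem.mpr (hgen i hi)
    rw [map_add, map_mul, map_mul] at h0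
    have e1 : v' i = v ⟨i, by omega⟩ := hv'eq i (by omega)
    have e2 : v' (i + 1) = v ⟨i + 1, by omega⟩ := hv'eq (i + 1) hi
    simp only [ha, hb, e1, e2]
    linear_combination h0
  have hA : mk (X (Sum.inl (v ⟨0, by omega⟩)) * X (Sum.inr (v ⟨2 * m, by omega⟩)) -
      X (Sum.inl (v ⟨2 * m, by omega⟩)) * X (Sum.inr (v ⟨0, by omega⟩)))
      = a 0 * b (2 * m) - a (2 * m) * b 0 := by
    have e0' : v' 0 = v ⟨0, by omega⟩ := hv'eq 0 (by omega)
    have e2' : v' (2 * m) = v ⟨2 * m, by omega⟩ := hv'eq (2 * m) le_rfl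
    simp only [ha, hb, e0', e2', map_sub, map_mul]
  have hprod : mk (∏ i : Fin (2 * m - 1),
      X (Sum.inr (v ⟨i.val + 1, by have := i.isLt; omega⟩)))
      = ∏ i ∈ Finset.range (2 * m - 1), b (i + 1) := by
    rw [map_prod, ← Fin.prod_univ_eq_prod_range (fun j => b (j + 1)) (2 * m - 1)]
    refine Finset.prod_congr rfl fun i _ => ?_
    simp only [hb]
    exact congrArg (fun t => mk (X (Sum.inr t)))
      (hv'eq (i.val + 1) (by have := i.isLt; omega)).symm
  rw [map_mul, hA, hprod]
  have P0 : ∏ i ∈ Finset.range (2 * m), b i =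
      (-1) ^ m * ∏ i ∈ Finset.range (2 * m), a i :=
    aux_pair a b m (fun i hi => hrel i (by omega))
  have P1 : ∏ i ∈ Finset.range (2 * m), b (i + 1) =
      (-1) ^ m * ∏ i ∈ Finset.range (2 * m), a (i + 1) :=
    aux_pair (fun j => a (j + 1)) (fun j => b (j + 1)) m (fun i hi => hrel (i + 1) (by omega))
  have hsplit : 2 * m = (2 * m - 1) + 1 := by omega
  have e1 : b (2 * m) * ∏ i ∈ Finset.range (2 * m - 1), b (i + 1)
      = ∏ i ∈ Finset.range (2 * m), b (i + 1) := by
    conv_rhs => rw [hsplit, Finset.prod_range_succ, hsplit.symm]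
    exact mul_comm _ _
  have e0 : b 0 * ∏ i ∈ Finset.range (2 * m - 1), b (i + 1)
      = ∏ i ∈ Finset.range (2 * m), b i := by
    conv_rhs => rw [hsplit, Finset.prod_range_succ']
    exact mul_comm _ _
  have ea1 : a 0 * ∏ i ∈ Finset.range (2 * m), a (i + 1)
      = ∏ i ∈ Finset.range (2 * m + 1), a i := by
    rw [Finset.prod_range_succ']
    exact mul_comm _ _
  have ea0 : (∏ i ∈ Finset.range (2 * m), a i) * a (2 * m)
      = ∏ i ∈ Finset.range (2 * m + 1), a i := (Finset.prod_range_succ a (2 * m)).symm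
  have F1 : a 0 * (b (2 * m) * ∏ i ∈ Finset.range (2 * m - 1), b (i + 1))
      = (-1) ^ m * ∏ i ∈ Finset.range (2 * m + 1), a i := by
    rw [e1, P1, ← ea1]; ring
  have F2 : a (2 * m) * (b 0 * ∏ i ∈ Finset.range (2 * m - 1), b (i + 1))
      = (-1) ^ m * ∏ i ∈ Finset.range (2 * m + 1), a i := by
    rw [e0, P0, ← ea0]; ring
  linear_combination F1 - F2
end

section
/- In the polynomial ring S = K[x₁,...,x_{2m+1},y₁,...,y_{2m+1}] over a field K, the following identity holds: (x₁ y_{2m+1} − x_{2m+1} y₁) · y₂y₃⋯y_{2m} = Σ_{i=1}^{m} [ −(x_{2i+1} z / (y_{2i-1} y_{2i} y_{2i+1}))(x_{2i-1}x_{2i} + y_{2i-1}y_{2i}) + (x_{2i-1} z / (y_{2i-1} y_{2i} y_{2i+1}))(x_{2i}x_{2i+1} + y_{2i}y_{2i+1}) ], where z = y₁y₂⋯y_{2m+1}. -/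
/-- The `x`-variables of the polynomial ring `K[x₁,…,y₁,…]` (indexed by `ℕ ⊕ ℕ`). -/
noncomputable def xv (K : Type) [Field K] (i : ℕ) : MvPolynomial (ℕ ⊕ ℕ) K :=
  MvPolynomial.X (Sum.inl i)

/-- The `y`-variables of the polynomial ring `K[x₁,…,y₁,…]` (indexed by `ℕ ⊕ ℕ`). -/
noncomputable def yv (K : Type) [Field K] (i : ℕ) : MvPolynomial (ℕ ⊕ ℕ) K :=
  MvPolynomial.X (Sum.inr i)

/-- In `K[x₁,...,x_{2m+1}, y₁,...,y_{2m+1}]` one has the identity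
`(x₁y_{2m+1} − x_{2m+1}y₁)·y₂y₃⋯y_{2m}
  = Σ_{i=1}^{m} [ −(x_{2i+1} z/(y_{2i−1}y_{2i}y_{2i+1}))(x_{2i−1}x_{2i}+y_{2i−1}y_{2i})
      + (x_{2i−1} z/(y_{2i−1}y_{2i}y_{2i+1}))(x_{2i}x_{2i+1}+y_{2i}y_{2i+1}) ]`,
where `z = y₁y₂⋯y_{2m+1}`; the monomial quotients are written out as honest monomials. -/
theorem even_path_identity (K : Type) [Field K] (m : ℕ) (hm : 1 ≤ m) :
    (xv K 1 * yv K (2 * m + 1) - xv K (2 * m + 1) * yv K 1) *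
        ∏ j ∈ Finset.Icc 2 (2 * m), yv K j =
      ∑ i ∈ Finset.Icc 1 m,
        (-(xv K (2 * i + 1) *
            ∏ j ∈ Finset.Icc 1 (2 * m + 1) \ {2 * i - 1, 2 * i, 2 * i + 1}, yv K j) *
              (xv K (2 * i - 1) * xv K (2 * i) + yv K (2 * i - 1) * yv K (2 * i)) +
         (xv K (2 * i - 1) *
            ∏ j ∈ Finset.Icc 1 (2 * m + 1) \ {2 * i - 1, 2 * i, 2 * i + 1}, yv K j) *
              (xv K (2 * i) * xv K (2 * i + 1) + yv K (2 * i) * yv K (2 * i + 1))) := by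
  set A : Finset ℕ := Finset.Icc 1 (2 * m + 1) with hA
  -- g k = x_{2k+1} * ∏_{j ∈ A \ {2k+1}} y_j
  set g : ℕ → MvPolynomial (ℕ ⊕ ℕ) K :=
    fun k => xv K (2 * k + 1) * ∏ j ∈ A \ {2 * k + 1}, yv K j with hg
  -- each summand equals g (i-1) - g i
  have key : ∀ i ∈ Finset.Icc 1 m,
      (-(xv K (2 * i + 1) *
            ∏ j ∈ A \ {2 * i - 1, 2 * i, 2 * i + 1}, yv K j) *
              (xv K (2 * i - 1) * xv K (2 * i) + yv K (2 * i - 1) * yv K (2 * i)) +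
         (xv K (2 * i - 1) *
            ∏ j ∈ A \ {2 * i - 1, 2 * i, 2 * i + 1}, yv K j) *
              (xv K (2 * i) * xv K (2 * i + 1) + yv K (2 * i) * yv K (2 * i + 1)))
        = g (i - 1) - g i := by
    intro i hi
    simp only [Finset.mem_Icc] at hi
    obtain ⟨hi1, hi2⟩ := hi
    have h1 : 2 * (i - 1) + 1 = 2 * i - 1 := by omega
    have claim1 : (∏ j ∈ A \ {2 * i - 1, 2 * i, 2 * i + 1}, yv K j) *
        (yv K (2 * i - 1) * yv K (2 * i)) = ∏ j ∈ A \ {2 * i + 1}, yv K j := by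
      have hset : A \ {2 * i - 1, 2 * i, 2 * i + 1}
          = (A \ {2 * i + 1}) \ {2 * i - 1, 2 * i} := by
        ext j
        simp only [hA, Finset.mem_sdiff, Finset.mem_Icc, Finset.mem_insert,
          Finset.mem_singleton]
        omega
      have hsub : ({2 * i - 1, 2 * i} : Finset ℕ) ⊆ A \ {2 * i + 1} := by
        intro j hj
        simp only [Finset.mem_insert, Finset.mem_singleton] at hj
        simp only [hA, Finset.mem_sdiff, Finset.mem_Icc, Finset.mem_singleton]
        omega
      rw [hset, ← Finset.prod_sdiff hsub, Finset.prod_pair (by omega)]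
    have claim2 : (∏ j ∈ A \ {2 * i - 1, 2 * i, 2 * i + 1}, yv K j) *
        (yv K (2 * i) * yv K (2 * i + 1)) = ∏ j ∈ A \ {2 * i - 1}, yv K j := by
      have hset : A \ {2 * i - 1, 2 * i, 2 * i + 1}
          = (A \ {2 * i - 1}) \ {2 * i, 2 * i + 1} := by
        ext j
        simp only [hA, Finset.mem_sdiff, Finset.mem_Icc, Finset.mem_insert,
          Finset.mem_singleton]
        omega
      have hsub : ({2 * i, 2 * i + 1} : Finset ℕ) ⊆ A \ {2 * i - 1} := by
        intro j hj
        simp only [Finset.mem_insert, Finset.mem_singleton] at hj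
        simp only [hA, Finset.mem_sdiff, Finset.mem_Icc, Finset.mem_singleton]
        omega
      rw [hset, ← Finset.prod_sdiff hsub, Finset.prod_pair (by omega)]
    simp only [hg, h1]
    linear_combination (-(xv K (2 * i + 1))) * claim1 + (xv K (2 * i - 1)) * claim2
  rw [Finset.sum_congr rfl key]
  -- telescope
  have htel : ∑ i ∈ Finset.Icc 1 m, (g (i - 1) - g i) = g 0 - g m := by
    have hI : Finset.Icc 1 m = Finset.Ico 1 (m + 1) := by
      ext j; simp [Nat.lt_succ_iff]
    rw [hI, Finset.sum_Ico_eq_sum_range]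
    have : ∀ k, g (1 + k - 1) - g (1 + k) = g k - g (k + 1) := by
      intro k; congr 2 <;> omega
    simp only [this, Nat.add_sub_cancel]
    simpa using Finset.sum_range_sub' g m
  rw [htel]
  -- identify g 0 and g m with the LHS pieces
  have e1 : A \ {2 * 0 + 1} = insert (2 * m + 1) (Finset.Icc 2 (2 * m)) := by
    ext j
    simp only [hA, Finset.mem_sdiff, Finset.mem_Icc, Finset.mem_singleton,
      Finset.mem_insert]
    omega
  have e2 : A \ {2 * m + 1} = insert 1 (Finset.Icc 2 (2 * m)) := by
    ext j
    simp only [hA, Finset.mem_sdiff, Finset.mem_Icc, Finset.mem_singleton,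
      Finset.mem_insert]
    omega
  have hnm1 : (2 * m + 1 : ℕ) ∉ Finset.Icc 2 (2 * m) := by
    simp [Finset.mem_Icc]
  have hnm2 : (1 : ℕ) ∉ Finset.Icc 2 (2 * m) := by
    simp [Finset.mem_Icc]
  simp only [hg, e1, e2, Finset.prod_insert hnm1, Finset.prod_insert hnm2]
  ring
end
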